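/- Let A ∈ M_2(ℂ)^{⊗n} and J ⊆ [n]. Then Σ_{k=1}^{3} Σ_{j∈J} Inf[g_{j,k}] ≤ Inf[A], where g_{j,k} = τ_J(A·σ_{k(j)}) is regarded as an element of M_2(ℂ)^{⊗n} by tensoring with the identity on the qubits in J. -/

import Mathlib

open scoped BigOperators
open Matrix

noncomputable section

/-- The index set of the `n`-qubit Hilbert space `(ℂ²)^{⊗n}`. -/
abbrev QIdx (n : ℕ) := Fin n → Fin 2

/-- The algebra `M_2(ℂ)^{⊗n} ≅ M_{2^n}(ℂ)` of observables on `n` qubits. -/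
abbrev QOp (n : ℕ) := Matrix (QIdx n) (QIdx n) ℂ

/-- The four Pauli matrices `σ_0, σ_1, σ_2, σ_3`. -/
def pauli : Fin 4 → Matrix (Fin 2) (Fin 2) ℂ :=
  ![!![1, 0; 0, 1], !![0, 1; 1, 0], !![0, -Complex.I; Complex.I, 0], !![1, 0; 0, -1]]

/-- The Pauli string `σ_s = σ_{s_1} ⊗ ⋯ ⊗ σ_{s_n}`. -/
def pauliString {n : ℕ} (s : Fin n → Fin 4) : QOp n :=
  Matrix.of fun x y => ∏ j, pauli (s j) (x j) (y j)

/-- The normalized trace `τ(A) = 2^{-n} tr(A)`. -/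
def ntrace {n : ℕ} (A : QOp n) : ℂ := (2 ^ n : ℂ)⁻¹ * A.trace

/-- The Pauli (Fourier) coefficient `Â_s = τ(σ_s A)`. -/
def coef {n : ℕ} (A : QOp n) (s : Fin n → Fin 4) : ℂ := ntrace (pauliString s * A)

/-- The support `{j : s_j ≠ 0}` of a Pauli index. -/
def psupp {n : ℕ} (s : Fin n → Fin 4) : Finset (Fin n) :=
  Finset.univ.filter fun j => s j ≠ 0

/-- `τ(|A|^p)`, computed via the eigenvalues of `Aᴴ A` (so `|A| = (AᴴA)^{1/2}`). -/
def traceAbsPow {n : ℕ} (p : ℝ) (A : QOp n) : ℝ :=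
  (2 ^ n : ℝ)⁻¹ * ∑ i, ((Matrix.isHermitian_conjTranspose_mul_self A).eigenvalues i) ^ (p / 2)

/-- The normalized Schatten `p`-norm `‖A‖_p = τ(|A|^p)^{1/p}`. -/
def pnorm {n : ℕ} (p : ℝ) (A : QOp n) : ℝ := traceAbsPow p A ^ (1 / p)

/-- The operator norm `‖A‖ = ‖A‖_∞`. -/
def opNorm {n : ℕ} (A : QOp n) : ℝ := ‖Matrix.toEuclideanCLM (𝕜 := ℂ) A‖

/-- The `j`-th derivative `d_j(A) = (I - E_j)(A) = ∑_{s : s_j ≠ 0} Â_s σ_s`. -/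
def dOp {n : ℕ} (j : Fin n) (A : QOp n) : QOp n :=
  ∑ s ∈ Finset.univ.filter (fun s : Fin n → Fin 4 => s j ≠ 0), coef A s • pauliString s

/-- The derivative `d_J = ∏_{j ∈ J} d_j` for a subset `J ⊆ [n]`:
`d_J(A) = ∑_{s : J ⊆ supp s} Â_s σ_s`. -/
def dSet {n : ℕ} (J : Finset (Fin n)) (A : QOp n) : QOp n :=
  ∑ s ∈ Finset.univ.filter (fun s : Fin n → Fin 4 => ∀ j ∈ J, s j ≠ 0),
    coef A s • pauliString s

/-- The conditional expectation `E_J` killing all Pauli terms meeting `J`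
(i.e. the normalized partial trace `τ_J` over the qubits in `J`, re-embedded in
`M_2(ℂ)^{⊗n}` by tensoring with the identity on the qubits in `J`). -/
def eSet {n : ℕ} (J : Finset (Fin n)) (A : QOp n) : QOp n :=
  ∑ s ∈ Finset.univ.filter (fun s : Fin n → Fin 4 => ∀ j ∈ J, s j = 0),
    coef A s • pauliString s

/-- `σ_{k(j)}` : the Pauli matrix `σ_k` on the `j`-th factor and identity elsewhere. -/
def sigmaAt {n : ℕ} (j : Fin n) (k : Fin 4) : QOp n :=
  pauliString fun i => if i = j then k else 0

/-- The `j`-th `L^p`-influence `Inf^p_j[A] = ‖d_j(A)‖_p^p`. -/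
def infP {n : ℕ} (p : ℝ) (j : Fin n) (A : QOp n) : ℝ := traceAbsPow p (dOp j A)

/-- The total `L^p`-influence `Inf^p[A] = ∑_j Inf^p_j[A]`. -/
def infPTotal {n : ℕ} (p : ℝ) (A : QOp n) : ℝ := ∑ j, infP p j A

/-- The `L^p`-influence of a subset, `Inf^p_J[A] = ‖d_J(A)‖_p^p`. -/
def infPSet {n : ℕ} (p : ℝ) (J : Finset (Fin n)) (A : QOp n) : ℝ := traceAbsPow p (dSet J A)

/-- The variance `Var[A] = ‖A - τ(A)1‖_2²`. -/
def var {n : ℕ} (A : QOp n) : ℝ := traceAbsPow 2 (A - ntrace A • 1)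

/-- The noise operator `T_δ(A) = ∑_s δ^{|supp s|} Â_s σ_s`. -/
def noiseOp {n : ℕ} (δ : ℝ) (A : QOp n) : QOp n :=
  ∑ s : Fin n → Fin 4, ((δ : ℂ) ^ (psupp s).card * coef A s) • pauliString s

/-- The soft chunk `B_d = (T_{1-1/(3d)} - T_{1-1/(2d)})(A)`. -/
def softChunk {n : ℕ} (d : ℕ) (A : QOp n) : QOp n :=
  noiseOp (1 - 1 / (3 * (d : ℝ))) A - noiseOp (1 - 1 / (2 * (d : ℝ))) A

/-- `W_{≥k}[A] = ∑_{|supp s| ≥ k} |Â_s|²`. -/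
def wGE {n : ℕ} (k : ℕ) (A : QOp n) : ℝ :=
  ∑ s ∈ Finset.univ.filter (fun s : Fin n → Fin 4 => k ≤ (psupp s).card), ‖coef A s‖ ^ 2

/-- `W_{≈d}[A] = ∑_{d ≤ |supp s| < 2d} |Â_s|²`. -/
def wApprox {n : ℕ} (d : ℕ) (A : QOp n) : ℝ :=
  ∑ s ∈ Finset.univ.filter
      (fun s : Fin n → Fin 4 => d ≤ (psupp s).card ∧ (psupp s).card < 2 * d),
    ‖coef A s‖ ^ 2

/-- `W_J(A) = ∑_{|supp v ∩ J| = 1} |Â_v|²`. -/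
def wSet {n : ℕ} (J : Finset (Fin n)) (A : QOp n) : ℝ :=
  ∑ v ∈ Finset.univ.filter (fun v : Fin n → Fin 4 => (psupp v ∩ J).card = 1), ‖coef A v‖ ^ 2

/-- The noise stability `S_δ[A] = ∑_{s ≠ 0} δ^{|supp s|} |Â_s|²`. -/
def noiseStab {n : ℕ} (δ : ℝ) (A : QOp n) : ℝ :=
  ∑ s ∈ Finset.univ.filter (fun s : Fin n → Fin 4 => s ≠ 0),
    δ ^ (psupp s).card * ‖coef A s‖ ^ 2

/-- The partial Fourier series `∂_J^γ(A) = ∑_{s : s_J = γ} Â_s σ_{s_{J^c}}`,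
encoded by a single Pauli index `v` with `supp v = J` and `v|_J = γ ∈ {1,2,3}^J`,
re-embedded in `M_2(ℂ)^{⊗n}` by tensoring with the identity on the qubits in `J`. -/
def dPartial {n : ℕ} (v : Fin n → Fin 4) (A : QOp n) : QOp n :=
  ∑ s ∈ Finset.univ.filter (fun s : Fin n → Fin 4 => ∀ j ∈ psupp v, s j = v j),
    coef A s • pauliString fun j => if j ∈ psupp v then 0 else s j


/-!
By Parseval, `Inf[A] = ∑_s |supp s| |Â_s|²` in the Pauli basis. For `s` vanishing on `J`, the
Pauli coefficient of `τ_J(A σ_{k(j)})` at `s` is `Â_{s[j ↦ k]}`, and `s[j ↦ k]` has one more qubit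
in its support than `s`. Since `(k, j, s) ↦ s[j ↦ k]` is injective for `k ≠ 0` and `j ∈ J`, the
left side is a sub-sum of this expansion of `Inf[A]` taken with smaller weights.
-/

namespace Matrix

variable {ι m n p R : Type*} [Fintype ι]

def kroneckerPi [CommMonoid R] (M : ι → Matrix m n R) : Matrix (ι → m) (ι → n) R :=
  of fun x y => ∏ i, M i (x i) (y i)

theorem kroneckerPi_mul [DecidableEq ι] [Fintype n] [CommSemiring R]
    (M : ι → Matrix m n R) (N : ι → Matrix n p R) :
    kroneckerPi M * kroneckerPi N = kroneckerPi fun i => M i * N i := by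
  ext x z
  simp only [kroneckerPi, mul_apply, of_apply, ← Finset.prod_mul_distrib]
  exact (Fintype.prod_sum fun i b => M i (x i) b * N i b (z i)).symm

theorem trace_kroneckerPi [DecidableEq ι] [Fintype m] [CommSemiring R] (M : ι → Matrix m m R) :
    (kroneckerPi M).trace = ∏ i, (M i).trace :=
  (Fintype.prod_sum fun i a => M i a a).symm

theorem conjTranspose_kroneckerPi [CommSemiring R] [StarRing R] (M : ι → Matrix m n R) :
    (kroneckerPi M)ᴴ = kroneckerPi fun i => (M i)ᴴ := by
  ext x y
  simp [kroneckerPi, conjTranspose_apply, star_prod]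

end Matrix

section Pauli

variable {n : ℕ}

theorem pauliString_eq_kroneckerPi (s : Fin n → Fin 4) :
    pauliString s = kroneckerPi fun j => pauli (s j) := rfl

theorem pauli_zero : pauli 0 = 1 := by
  ext i j
  fin_cases i <;> fin_cases j <;> simp [pauli]

theorem conjTranspose_pauli (a : Fin 4) : (pauli a)ᴴ = pauli a := by
  ext i j
  fin_cases a <;> fin_cases i <;> fin_cases j <;> simp [pauli]

theorem trace_pauli_mul (a b : Fin 4) :
    (pauli a * pauli b).trace = if a = b then 2 else 0 := by
  fin_cases a <;> fin_cases b <;>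
    simp [pauli, trace, Fin.sum_univ_two, Complex.I_mul_I] <;> ring_nf

theorem conjTranspose_pauliString (s : Fin n → Fin 4) : (pauliString s)ᴴ = pauliString s := by
  simp only [pauliString_eq_kroneckerPi, conjTranspose_kroneckerPi, conjTranspose_pauli]

theorem trace_pauliString_mul (s t : Fin n → Fin 4) :
    (pauliString s * pauliString t).trace = if s = t then (2 : ℂ) ^ n else 0 := by
  simp only [pauliString_eq_kroneckerPi, kroneckerPi_mul, trace_kroneckerPi, trace_pauli_mul]
  split_ifs with h
  · simp [h]
  · obtain ⟨j, hj⟩ := Function.ne_iff.mp h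
    exact Finset.prod_eq_zero (Finset.mem_univ j) (if_neg hj)

theorem sigmaAt_mul_pauliString {j : Fin n} (k : Fin 4) {s : Fin n → Fin 4} (hs : s j = 0) :
    sigmaAt j k * pauliString s = pauliString (Function.update s j k) := by
  simp only [sigmaAt, pauliString_eq_kroneckerPi, kroneckerPi_mul]
  congr 1
  funext i
  by_cases h : i = j
  · subst h; simp [hs, pauli_zero]
  · simp [h, pauli_zero]

end Pauli

section Fourier

variable {n : ℕ}

theorem coef_sum_smul_pauliString (S : Finset (Fin n → Fin 4)) (c : (Fin n → Fin 4) → ℂ)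
    (s : Fin n → Fin 4) :
    coef (∑ t ∈ S, c t • pauliString t) s = if s ∈ S then c s else 0 := by
  have h2 : (2 : ℂ) ^ n ≠ 0 := pow_ne_zero _ two_ne_zero
  simp only [coef, ntrace, Finset.mul_sum, Matrix.trace_sum, Matrix.mul_smul, Matrix.trace_smul,
    smul_eq_mul, trace_pauliString_mul, mul_ite, mul_zero, Finset.sum_ite_eq]
  split_ifs <;> field_simp

theorem coef_mul_sigmaAt (A : QOp n) {j : Fin n} (k : Fin 4) {s : Fin n → Fin 4}
    (hs : s j = 0) : coef (A * sigmaAt j k) s = coef A (Function.update s j k) := by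
  rw [coef, coef, ntrace, ntrace, ← sigmaAt_mul_pauliString k hs, ← Matrix.mul_assoc,
    Matrix.trace_mul_comm, Matrix.mul_assoc]

theorem traceAbsPow_two (B : QOp n) :
    traceAbsPow 2 B = (2 ^ n : ℝ)⁻¹ * (Bᴴ * B).trace.re := by
  have hB := Matrix.isHermitian_conjTranspose_mul_self B
  simp [traceAbsPow, hB.trace_eq_sum_eigenvalues, Complex.re_sum]

theorem traceAbsPow_two_sum_smul_pauliString (S : Finset (Fin n → Fin 4))
    (c : (Fin n → Fin 4) → ℂ) :
    traceAbsPow 2 (∑ s ∈ S, c s • pauliString s) = ∑ s ∈ S, ‖c s‖ ^ 2 := by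
  rw [traceAbsPow_two, Matrix.conjTranspose_sum, Finset.sum_mul_sum]
  simp only [Matrix.conjTranspose_smul, conjTranspose_pauliString, Matrix.smul_mul,
    Matrix.mul_smul, smul_smul, Matrix.trace_sum, Matrix.trace_smul, smul_eq_mul,
    trace_pauliString_mul, mul_ite, mul_zero, Finset.sum_ite_eq, Finset.sum_ite_mem,
    Finset.inter_self, Complex.star_def, Complex.mul_conj, Complex.normSq_eq_norm_sq]
  push_cast
  rw [← Finset.sum_mul]
  norm_cast
  rw [mul_comm, mul_assoc, mul_inv_cancel₀ (by positivity), mul_one]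

end Fourier

section Influence

variable {n : ℕ}

theorem infP_two (j : Fin n) (A : QOp n) :
    infP 2 j A = ∑ s with s j ≠ 0, ‖coef A s‖ ^ 2 :=
  traceAbsPow_two_sum_smul_pauliString _ _

theorem infPTotal_two (A : QOp n) :
    infPTotal 2 A = ∑ s, ((psupp s).card : ℝ) * ‖coef A s‖ ^ 2 := by
  simp only [infPTotal, infP_two, Finset.sum_filter]
  rw [Finset.sum_comm]
  refine Finset.sum_congr rfl fun s _ => ?_
  rw [← Finset.sum_filter, Finset.sum_const, nsmul_eq_mul, psupp]

theorem infPTotal_eSet (J : Finset (Fin n)) (B : QOp n) :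
    infPTotal 2 (eSet J B)
      = ∑ s with ∀ i ∈ J, s i = 0, ((psupp s).card : ℝ) * ‖coef B s‖ ^ 2 := by
  rw [infPTotal_two, Finset.sum_filter]
  refine Finset.sum_congr rfl fun s _ => ?_
  simp only [eSet, coef_sum_smul_pauliString, Finset.mem_filter, Finset.mem_univ, true_and]
  split_ifs <;> simp

theorem card_psupp_update {s : Fin n → Fin 4} {j : Fin n} (hs : s j = 0) {k : Fin 4}
    (hk : k ≠ 0) : (psupp (Function.update s j k)).card = (psupp s).card + 1 := by
  have : psupp (Function.update s j k) = insert j (psupp s) := by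
    ext i
    by_cases h : i = j
    · subst h; simp [psupp, hk]
    · simp [psupp, h]
  rw [this, Finset.card_insert_of_notMem (by simp [psupp, hs])]

theorem infPTotal_eSet_mul_sigmaAt_le (A : QOp n) {J : Finset (Fin n)} {j : Fin n} (hj : j ∈ J)
    {k : Fin 4} (hk : k ≠ 0) :
    infPTotal 2 (eSet J (A * sigmaAt j k))
      ≤ ∑ s with ∀ i ∈ J, s i = 0,
          ((psupp (Function.update s j k)).card : ℝ) * ‖coef A (Function.update s j k)‖ ^ 2 := by
  rw [infPTotal_eSet]
  refine Finset.sum_le_sum fun s hs => ?_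
  have hsj : s j = 0 := (Finset.mem_filter.mp hs).2 j hj
  rw [coef_mul_sigmaAt A k hsj, card_psupp_update hsj hk]
  gcongr
  exact_mod_cast Nat.le_succ _

end Influence

theorem Function.injOn_update_of_notMem {ι α : Type*} [DecidableEq ι] {a : α} {K : Finset α}
    (hK : a ∉ K) (J : Finset ι) {S : Finset (ι → α)} (hS : ∀ s ∈ S, ∀ i ∈ J, s i = a) :
    Set.InjOn (fun p : α × ι × (ι → α) => Function.update p.2.2 p.2.1 p.1) ↑(K ×ˢ J ×ˢ S) := by
  rintro ⟨k, j, s⟩ hp ⟨k', j', s'⟩ hp' h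
  simp only [Finset.mem_coe, Finset.mem_product] at hp hp' h
  obtain ⟨hk, hj, hs⟩ := hp
  obtain ⟨-, -, hs'⟩ := hp'
  obtain rfl : j = j' := by
    by_contra hne
    have := congrFun h j
    rw [Function.update_self, Function.update_of_ne hne, hS s' hs' j hj] at this
    exact hK (this ▸ hk)
  obtain rfl : k = k' := by simpa using congrFun h j
  have hss : s = s' :=
    calc s = Function.update (Function.update s j k) j a := by
          rw [Function.update_idem, Function.update_eq_self_iff.mpr (hS s hs j hj).symm]
      _ = s' := by
          rw [h, Function.update_idem, Function.update_eq_self_iff.mpr (hS s' hs' j hj).symm]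
  rw [hss]

theorem Finset.sum_sum_sum_update_le_sum {ι α M : Type*} [Fintype ι] [DecidableEq ι] [Fintype α]
    [AddCommMonoid M] [PartialOrder M] [IsOrderedAddMonoid M] {a : α} {K : Finset α} (hK : a ∉ K)
    (J : Finset ι) {S : Finset (ι → α)} (hS : ∀ s ∈ S, ∀ i ∈ J, s i = a) {f : (ι → α) → M}
    (hf : ∀ v, 0 ≤ f v) :
    ∑ k ∈ K, ∑ j ∈ J, ∑ s ∈ S, f (Function.update s j k) ≤ ∑ v, f v := by
  classical
  calc _ = ∑ p ∈ K ×ˢ J ×ˢ S, f (Function.update p.2.2 p.2.1 p.1) := by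
        simp only [Finset.sum_product]
    _ = ∑ v ∈ (K ×ˢ J ×ˢ S).image fun p => Function.update p.2.2 p.2.1 p.1, f v :=
        (Finset.sum_image (Function.injOn_update_of_notMem hK J hS)).symm
    _ ≤ ∑ v, f v := Finset.sum_le_univ_sum_of_nonneg hf

/-- **Lemma 3.4**: `∑_{k=1}^3 ∑_{j∈J} Inf[g_{j,k}] ≤ Inf[A]`, where
`g_{j,k} = τ_J(A σ_{k(j)})` is regarded as an element of `M_2(ℂ)^{⊗n}`. -/
theorem influence_of_restrictions (n : ℕ) (A : QOp n) (J : Finset (Fin n)) :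
    ∑ k ∈ ({1, 2, 3} : Finset (Fin 4)), ∑ j ∈ J,
        infPTotal 2 (eSet J (A * sigmaAt j k))
      ≤ infPTotal 2 A := by
  have hK : (0 : Fin 4) ∉ ({1, 2, 3} : Finset (Fin 4)) := by decide
  rw [infPTotal_two]
  refine (Finset.sum_le_sum fun k hk => Finset.sum_le_sum fun j hj =>
    infPTotal_eSet_mul_sigmaAt_le A hj (ne_of_mem_of_not_mem hk hK)).trans ?_
  exact Finset.sum_sum_sum_update_le_sum hK J (fun s hs => (Finset.mem_filter.mp hs).2)
    (f := fun v => ((psupp v).card : ℝ) * ‖coef A v‖ ^ 2) fun v => by positivity
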